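/- arXiv:2102.07867 — 2 statements merged into one kernel-verified Lean document; each statement's English description precedes it below -/
import Mathlib

section
/- Let β, d > 0 and m = n^{β/(2β+d)}. Define φ(λ) = λ² for |λ| ≤ m and φ(λ) = |λ|^{(2β+d)/β} for |λ| > m. Then the Young–Fenchel transform φ*(u) = sup_λ (λu − φ(λ)) satisfies φ*(u) ≥ u²/4 for 0 ≤ u ≤ m and φ*(u) ≥ c(β,d) u^{(2β+d)/(β+d)} for u ≥ m, where c(β,d) > 0 depends only on β and d. -/
open Real

/-- Lower bounds for the Young–Fenchel transform `φ*(u) = sup_λ (λu − φ(λ))` of the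
piecewise function `φ(λ) = λ²` for `|λ| ≤ m` and `φ(λ) = |λ|^{(2β+d)/β}` for `|λ| > m`,
where `m = n^{β/(2β+d)}`: `φ*(u) ≥ u²/4` on `[0, m]` and
`φ*(u) ≥ c(β,d) u^{(2β+d)/(β+d)}` for `u ≥ m`. -/
theorem young_fenchel_piecewise_lower_bound
    (β d : ℝ) (hβ : 0 < β) (hd : 0 < d) :
    ∃ c : ℝ, 0 < c ∧
      ∀ n : ℕ, 1 ≤ n →
        ∀ u : ℝ,
          ((0 ≤ u ∧ u ≤ (n : ℝ) ^ (β / (2 * β + d))) →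
            u ^ 2 / 4 ≤ ⨆ l : ℝ, (l * u -
              (if |l| ≤ (n : ℝ) ^ (β / (2 * β + d)) then l ^ 2
               else |l| ^ ((2 * β + d) / β)))) ∧
          ((n : ℝ) ^ (β / (2 * β + d)) ≤ u →
            c * u ^ ((2 * β + d) / (β + d)) ≤ ⨆ l : ℝ, (l * u -
              (if |l| ≤ (n : ℝ) ^ (β / (2 * β + d)) then l ^ 2
               else |l| ^ ((2 * β + d) / β)))) := by
  refine ⟨1/4, by norm_num, ?_⟩
  intro n hn u
  have hb2 : (0:ℝ) < 2*β+d := by positivity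
  set p : ℝ := (2*β+d)/β with hp
  set m : ℝ := (n:ℝ) ^ (β/(2*β+d)) with hmdef
  have hn1 : (1:ℝ) ≤ (n:ℝ) := by exact_mod_cast hn
  have hm1 : (1:ℝ) ≤ m := Real.one_le_rpow hn1 (by positivity)
  have hp2 : (2:ℝ) ≤ p := by
    rw [hp, le_div_iff₀ hβ]; linarith
  set f : ℝ → ℝ := fun l => l * u - (if |l| ≤ m then l^2 else |l| ^ p) with hf
  have hφ : ∀ l : ℝ, l^2 ≤ (if |l| ≤ m then l^2 else |l| ^ p) := by
    intro l
    split_ifs with h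
    · exact le_rfl
    · push_neg at h
      have h1 : (1:ℝ) ≤ |l| := le_trans hm1 h.le
      calc l^2 = |l| ^ (2:ℝ) := by
            rw [show (2:ℝ) = ((2:ℕ):ℝ) by norm_num, Real.rpow_natCast, sq_abs]
        _ ≤ |l| ^ p := Real.rpow_le_rpow_of_exponent_le h1 hp2
  have hbdd : BddAbove (Set.range f) := by
    refine ⟨u^2/4, ?_⟩
    rintro x ⟨l, rfl⟩
    have h1 : l*u - l^2 ≤ u^2/4 := by nlinarith [sq_nonneg (l - u/2)]
    have h2 := hφ l
    simp only [hf]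
    linarith
  constructor
  · rintro ⟨hu0, hum⟩
    have key : f (u/2) = u^2/4 := by
      simp only [hf]
      rw [if_pos (by rw [abs_of_nonneg (by linarith)]; linarith)]
      ring
    calc u^2/4 = f (u/2) := key.symm
      _ ≤ _ := le_ciSup hbdd (u/2)
  · intro hmu
    have hu1 : (1:ℝ) ≤ u := le_trans hm1 hmu
    have hu0 : (0:ℝ) < u := lt_of_lt_of_le one_pos hu1
    set q : ℝ := (2*β+d)/(β+d) with hq
    set a : ℝ := β/(β+d) with ha
    set l0 : ℝ := u ^ a / 2 with hl0
    have hl0pos : 0 < l0 := by positivity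
    have habs : |l0| = l0 := abs_of_pos hl0pos
    have haq : a + 1 = q := by
      rw [ha, hq]; field_simp; ring
    have hlu : l0 * u = u ^ q / 2 := by
      rw [hl0, div_mul_eq_mul_div, ← Real.rpow_add_one hu0.ne' a, haq]
    have key : (1/4) * u ^ q ≤ f l0 := by
      simp only [hf]
      rw [habs, hlu]
      split_ifs with h
      · -- quadratic branch: l0^2 = u^(2a)/4 ≤ u^q/4
        have h2a : u ^ (2*a) ≤ u ^ q := by
          apply Real.rpow_le_rpow_of_exponent_le hu1
          have hbd : (0:ℝ) < β + d := by positivity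
          rw [ha, hq, ← mul_div_assoc, div_le_div_iff₀ hbd hbd]
          nlinarith
        have hsq : l0^2 = u ^ (2*a) / 4 := by
          rw [hl0, div_pow, ← Real.rpow_natCast (u ^ a) 2,
            ← Real.rpow_mul hu0.le]
          norm_num
          rw [mul_comm]
        rw [hsq]
        linarith
      · -- power branch: l0^p = u^q / 2^p, 2^p ≥ 4
        have hap : a * p = q := by
          rw [ha, hp, hq]; field_simp
        have hlp : l0 ^ p = u ^ q / 2 ^ p := by
          rw [hl0, Real.div_rpow (by positivity) (by norm_num),
            ← Real.rpow_mul hu0.le, hap]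
        have h4 : (4:ℝ) ≤ 2 ^ p := by
          calc (4:ℝ) = 2 ^ (2:ℝ) := by norm_num [Real.rpow_natCast]
            _ ≤ 2 ^ p := Real.rpow_le_rpow_of_exponent_le one_le_two hp2
        have h2p : (0:ℝ) < 2 ^ p := by positivity
        have huq : (0:ℝ) ≤ u ^ q := by positivity
        have : u ^ q / 2 ^ p ≤ u ^ q / 4 := by
          apply div_le_div_of_nonneg_left huq (by norm_num) h4
        rw [hlp]
        linarith
    calc (1/4) * u ^ q ≤ f l0 := key
      _ ≤ _ := le_ciSup hbdd l0
end

section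
/- If f ∈ H(α, L) and K satisfies ∫K = 1, ∫|y|^α|K(y)|dy = Cₖ < ∞, and ξ_1,…,ξ_n are i.i.d. with density f, then the bias of the Wolverton–Wagner estimator satisfies |E f_n(x) − f(x)| ≤ (L Cₖ / n) Σ_{k=1}^n h_k^α for every x ∈ R^d. -/
/-!
Each summand of `f_n(x)` has expectation `∫ f(y) K_h(x - y) dy = ∫ K(u) f(x - h u) du`
(substitute `y = x - h u`). As `∫ K = 1`, its deviation from `f x` is
`∫ K(u) (f(x - h u) - f x) du`, which the Hölder condition bounds by `L h^α ∫ ‖u‖^α |K(u)| du`;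
averaging over the bandwidths `h_1, …, h_n` gives the claim.
-/

open MeasureTheory Finset Filter Topology Module

theorem continuous_of_abs_sub_le_mul_rpow {X : Type*} [PseudoMetricSpace X] {f : X → ℝ}
    {L α : ℝ} (hα : 0 < α) (hf : ∀ x y, |f x - f y| ≤ L * dist x y ^ α) : Continuous f := by
  refine continuous_iff_continuousAt.2 fun z => tendsto_iff_dist_tendsto_zero.2 ?_
  have hlim : Tendsto (fun y => L * dist y z ^ α) (𝓝 z) (𝓝 0) := by
    have := (((continuous_id.dist (continuous_const (y := z))).rpow_const
      fun _ => Or.inr hα.le).const_mul L).tendsto z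
    simpa [Real.zero_rpow hα.ne'] using this
  exact squeeze_zero (fun _ => dist_nonneg) (fun y => hf y z) hlim

theorem abs_sum_div_card_sub_le {ι : Type*} {s : Finset ι} (hs : s.Nonempty) {a b : ι → ℝ}
    {c : ℝ} (hab : ∀ k ∈ s, |a k - c| ≤ b k) :
    |(∑ k ∈ s, a k) / #s - c| ≤ (∑ k ∈ s, b k) / #s := by
  have hcard : (0 : ℝ) < #s := by exact_mod_cast hs.card_pos
  have hcenter : (∑ k ∈ s, a k) / #s - c = (∑ k ∈ s, (a k - c)) / #s := by
    rw [sum_sub_distrib, sum_const, nsmul_eq_mul]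
    field_simp
  rw [hcenter, abs_div, abs_of_pos hcard]
  gcongr
  exact (abs_sum_le_sum_abs _ _).trans (sum_le_sum hab)

section KernelSmoothing

variable {E : Type*} [NormedAddCommGroup E] [NormedSpace ℝ E] [MeasurableSpace E]
  [OpensMeasurableSpace E] {μ : Measure E} {f K : E → ℝ} {L α t : ℝ}

omit [MeasurableSpace E] [OpensMeasurableSpace E] in
theorem abs_mul_sub_comp_sub_smul_le (hf : ∀ x y, |f x - f y| ≤ L * ‖x - y‖ ^ α)
    (ht : 0 ≤ t) (x u : E) :
    |K u * (f (x - t • u) - f x)| ≤ L * t ^ α * (‖u‖ ^ α * |K u|) := by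
  have hfu := hf (x - t • u) x
  rw [sub_sub_cancel_left, norm_neg, norm_smul, Real.norm_of_nonneg ht,
    Real.mul_rpow ht (norm_nonneg u)] at hfu
  calc |K u * (f (x - t • u) - f x)| ≤ |K u| * (L * (t ^ α * ‖u‖ ^ α)) := by
        rw [abs_mul]; exact mul_le_mul_of_nonneg_left hfu (abs_nonneg _)
    _ = L * t ^ α * (‖u‖ ^ α * |K u|) := by ring

theorem integrable_mul_sub_comp_sub_smul (hfc : Continuous f)
    (hf : ∀ x y, |f x - f y| ≤ L * ‖x - y‖ ^ α) (hK : AEStronglyMeasurable K μ)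
    (hKα : Integrable (fun u => ‖u‖ ^ α * |K u|) μ) (ht : 0 ≤ t) (x : E) :
    Integrable (fun u => K u * (f (x - t • u) - f x)) μ :=
  (hKα.const_mul (L * t ^ α)).mono'
    (hK.mul (by fun_prop : Continuous fun u => f (x - t • u) - f x).aestronglyMeasurable)
    (ae_of_all _ fun u => (Real.norm_eq_abs _).trans_le (abs_mul_sub_comp_sub_smul_le hf ht x u))

theorem integrable_mul_comp_sub_smul (hfc : Continuous f)
    (hf : ∀ x y, |f x - f y| ≤ L * ‖x - y‖ ^ α) (hK : Integrable K μ)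
    (hKα : Integrable (fun u => ‖u‖ ^ α * |K u|) μ) (ht : 0 ≤ t) (x : E) :
    Integrable (fun u => K u * f (x - t • u)) μ := by
  refine ((integrable_mul_sub_comp_sub_smul hfc hf hK.1 hKα ht x).add
    (hK.mul_const (f x))).congr (ae_of_all _ fun u => ?_)
  simp only [Pi.add_apply]
  ring

theorem abs_integral_mul_comp_sub_smul_sub_le (hfc : Continuous f)
    (hf : ∀ x y, |f x - f y| ≤ L * ‖x - y‖ ^ α) (hK : Integrable K μ) (hK1 : ∫ u, K u ∂μ = 1)
    (hKα : Integrable (fun u => ‖u‖ ^ α * |K u|) μ) (ht : 0 ≤ t) (x : E) :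
    |∫ u, K u * f (x - t • u) ∂μ - f x| ≤ L * t ^ α * ∫ u, ‖u‖ ^ α * |K u| ∂μ := by
  have hbias : ∫ u, K u * f (x - t • u) ∂μ - f x = ∫ u, K u * (f (x - t • u) - f x) ∂μ := by
    simp only [mul_sub]
    rw [integral_sub (integrable_mul_comp_sub_smul hfc hf hK hKα ht x) (hK.mul_const _),
      integral_mul_const, hK1, one_mul]
  rw [hbias, ← integral_const_mul, ← Real.norm_eq_abs]
  exact norm_integral_le_of_norm_le (hKα.const_mul _)
    (ae_of_all _ fun u => (Real.norm_eq_abs _).trans_le (abs_mul_sub_comp_sub_smul_le hf ht x u))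

end KernelSmoothing

section ScaledKernel

variable {E F : Type*} [NormedAddCommGroup E] [NormedSpace ℝ E]

noncomputable def scaledKernel (K : E → ℝ) (t : ℝ) (z : E) : ℝ :=
  (t ^ finrank ℝ E)⁻¹ * K (t⁻¹ • z)

theorem scaledKernel_sub_sub_smul {K : E → ℝ} {t : ℝ} (ht : t ≠ 0) (x u : E) :
    scaledKernel K t (x - (x - t • u)) = (t ^ finrank ℝ E)⁻¹ * K u := by
  rw [scaledKernel, sub_sub_cancel, smul_smul, inv_mul_cancel₀ ht, one_smul]

theorem mul_scaledKernel_sub_sub_smul (f : E → ℝ) {K : E → ℝ} {t : ℝ} (ht : t ≠ 0) (x u : E) :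
    f (x - t • u) * scaledKernel K t (x - (x - t • u)) =
      (t ^ finrank ℝ E)⁻¹ * (K u * f (x - t • u)) := by
  rw [scaledKernel_sub_sub_smul ht]
  ring

variable [MeasurableSpace E] [BorelSpace E] [FiniteDimensional ℝ E] (μ : Measure E)
  [μ.IsAddHaarMeasure] [NormedAddCommGroup F] {K : E → ℝ} {t : ℝ}

theorem integral_comp_sub_smul [NormedSpace ℝ F] (G : E → F) (x : E) (t : ℝ) :
    ∫ u, G (x - t • u) ∂μ = |(t ^ finrank ℝ E)⁻¹| • ∫ y, G y ∂μ := by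
  rw [Measure.integral_comp_smul μ (fun z => G (x - z)), integral_sub_left_eq_self G μ x]

theorem integrable_comp_sub_smul_iff (G : E → F) (x : E) (ht : t ≠ 0) :
    Integrable (fun u => G (x - t • u)) μ ↔ Integrable G μ := by
  rw [integrable_comp_smul_iff μ (fun z => G (x - z)) ht]
  exact ⟨fun h => by simpa using h.comp_sub_left x, fun h => h.comp_sub_left x⟩

theorem integrable_scaledKernel_comp_sub (hK : Integrable K μ) (ht : t ≠ 0) (x : E) :
    Integrable (fun y => scaledKernel K t (x - y)) μ := by
  rw [← integrable_comp_sub_smul_iff μ _ x ht]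
  simpa only [scaledKernel_sub_sub_smul ht] using hK.const_mul _

theorem integrable_mul_scaledKernel_iff (f : E → ℝ) (ht : t ≠ 0) (x : E) :
    Integrable (fun y => f y * scaledKernel K t (x - y)) μ ↔
      Integrable (fun u => K u * f (x - t • u)) μ := by
  rw [← integrable_comp_sub_smul_iff μ _ x ht]
  simp only [mul_scaledKernel_sub_sub_smul f ht]
  exact integrable_const_mul_iff (by simp [ht]) _

theorem integral_mul_scaledKernel (f : E → ℝ) (ht : 0 < t) (x : E) :
    ∫ y, f y * scaledKernel K t (x - y) ∂μ = ∫ u, K u * f (x - t • u) ∂μ := by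
  have hcov := integral_comp_sub_smul μ (fun y => f y * scaledKernel K t (x - y)) x t
  simp only [mul_scaledKernel_sub_sub_smul f ht.ne', integral_const_mul, smul_eq_mul,
    abs_of_pos (inv_pos.2 (pow_pos ht _))] at hcov
  exact (mul_left_cancel₀ (inv_pos.2 (pow_pos ht _)).ne' hcov).symm

end ScaledKernel

section Density

variable {Ω E : Type*} [MeasurableSpace Ω] [MeasurableSpace E] {P : Measure Ω} {μ : Measure E}
  {ξ : Ω → E} {f g : E → ℝ}

theorem integrable_comp_of_map_eq_withDensity (hξ : Measurable ξ)
    (hdens : P.map ξ = μ.withDensity fun y => ENNReal.ofReal (f y)) (hfm : Measurable f)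
    (hf0 : ∀ y, 0 ≤ f y) (hg : AEStronglyMeasurable g μ)
    (hfg : Integrable (fun y => f y * g y) μ) : Integrable (fun ω => g (ξ ω)) P := by
  have hgξ : AEStronglyMeasurable g (P.map ξ) :=
    hdens ▸ hg.mono_ac (withDensity_absolutelyContinuous _ _)
  rw [← Function.comp_def, ← integrable_map_measure hgξ hξ.aemeasurable, hdens,
    integrable_withDensity_iff_integrable_smul' hfm.ennreal_ofReal
      (ae_of_all _ fun _ => ENNReal.ofReal_lt_top)]
  simpa only [ENNReal.toReal_ofReal (hf0 _), smul_eq_mul] using hfg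

theorem integral_comp_of_map_eq_withDensity (hξ : Measurable ξ)
    (hdens : P.map ξ = μ.withDensity fun y => ENNReal.ofReal (f y)) (hfm : Measurable f)
    (hf0 : ∀ y, 0 ≤ f y) (hg : AEStronglyMeasurable g μ) :
    ∫ ω, g (ξ ω) ∂P = ∫ y, f y * g y ∂μ := by
  have hgξ : AEStronglyMeasurable g (P.map ξ) :=
    hdens ▸ hg.mono_ac (withDensity_absolutelyContinuous _ _)
  rw [← integral_map hξ.aemeasurable hgξ, hdens,
    integral_withDensity_eq_integral_toReal_smul hfm.ennreal_ofReal
      (ae_of_all _ fun _ => ENNReal.ofReal_lt_top)]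
  simp only [ENNReal.toReal_ofReal (hf0 _), smul_eq_mul]

end Density

theorem wolverton_wagner_bias_bound_general
    {Ω : Type*} [MeasurableSpace Ω] (P : Measure Ω)
    (d : ℕ) (f K : EuclideanSpace ℝ (Fin d) → ℝ) (L α : ℝ)
    (hα0 : 0 < α)
    (hf : ∀ x y, |f x - f y| ≤ L * ‖x - y‖ ^ α)
    (hfpos : ∀ y, 0 ≤ f y)
    (hK : Integrable K) (hK1 : ∫ y, K y = 1)
    (hKα : Integrable (fun y => ‖y‖ ^ α * |K y|))
    (h : ℕ → ℝ) (hpos : ∀ k, 0 < h k)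
    (ξ : ℕ → Ω → EuclideanSpace ℝ (Fin d)) (hξmeas : ∀ k, Measurable (ξ k))
    (hdens : ∀ k, Measure.map (ξ k) P =
      volume.withDensity (fun y => ENNReal.ofReal (f y))) :
    ∀ x : EuclideanSpace ℝ (Fin d), ∀ n : ℕ, 1 ≤ n →
      |(∫ ω, (1 / (n : ℝ)) * ∑ k ∈ Icc 1 n,
          ((h k) ^ d)⁻¹ * K ((h k)⁻¹ • (x - ξ k ω)) ∂P) - f x| ≤
        (L * (∫ y, ‖y‖ ^ α * |K y|) / n) * ∑ k ∈ Icc 1 n, (h k) ^ α := by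
  intro x n hn
  have hfc : Continuous f :=
    continuous_of_abs_sub_le_mul_rpow hα0 fun x y => by simpa only [dist_eq_norm] using hf x y
  have hterm : ∀ k, (fun ω => ((h k) ^ d)⁻¹ * K ((h k)⁻¹ • (x - ξ k ω))) =
      fun ω => scaledKernel K (h k) (x - ξ k ω) := by
    simp [scaledKernel]
  have hKt : ∀ k, AEStronglyMeasurable (fun y => scaledKernel K (h k) (x - y)) :=
    fun k => (integrable_scaledKernel_comp_sub volume hK (hpos k).ne' x).1
  have hint : ∀ k, Integrable (fun ω => ((h k) ^ d)⁻¹ * K ((h k)⁻¹ • (x - ξ k ω))) P :=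
    fun k => by
      rw [hterm]
      exact integrable_comp_of_map_eq_withDensity (g := fun y => scaledKernel K (h k) (x - y))
        (hξmeas k) (hdens k) hfc.measurable hfpos (hKt k)
        ((integrable_mul_scaledKernel_iff volume f (hpos k).ne' x).2
          (integrable_mul_comp_sub_smul hfc hf hK hKα (hpos k).le x))
  have hmean : ∀ k, ∫ ω, ((h k) ^ d)⁻¹ * K ((h k)⁻¹ • (x - ξ k ω)) ∂P =
      ∫ u, K u * f (x - h k • u) := fun k => by
    rw [hterm, integral_comp_of_map_eq_withDensity (hξmeas k) (hdens k) hfc.measurable hfpos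
      (hKt k), integral_mul_scaledKernel volume f (hpos k) x]
  have hcard : (#(Icc 1 n) : ℝ) = n := by simp
  rw [integral_const_mul, integral_finsetSum _ fun k _ => hint k, one_div_mul_eq_div, ← hcard]
  calc _ ≤ (∑ k ∈ Icc 1 n, L * h k ^ α * ∫ y, ‖y‖ ^ α * |K y|) / #(Icc 1 n) :=
        abs_sum_div_card_sub_le (nonempty_Icc.2 hn) fun k _ => (hmean k).symm ▸
          abs_integral_mul_comp_sub_smul_sub_le hfc hf hK hK1 hKα (hpos k).le x
    _ = _ := by rw [← sum_mul, ← mul_sum]; ring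

/-- Bias of the Wolverton–Wagner estimator for an `L`-Hölder density `f` of order
`α`: `|E f_n(x) − f(x)| ≤ (L Cₖ / n) Σ_{k=1}^n h_k^α` where `Cₖ = ∫ |y|^α |K(y)| dy`. -/
theorem wolverton_wagner_bias_bound
    {Ω : Type*} [MeasurableSpace Ω] (P : Measure Ω) [IsProbabilityMeasure P]
    (d : ℕ) (f K : EuclideanSpace ℝ (Fin d) → ℝ) (L α : ℝ)
    (hL : 0 < L) (hα0 : 0 < α) (hα1 : α ≤ 1)
    (hf : ∀ x y, |f x - f y| ≤ L * ‖x - y‖ ^ α)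
    (hfpos : ∀ y, 0 ≤ f y)
    (hK : Integrable K) (hK1 : ∫ y, K y = 1)
    (hKα : Integrable (fun y => ‖y‖ ^ α * |K y|))
    (h : ℕ → ℝ) (hpos : ∀ k, 0 < h k)
    (ξ : ℕ → Ω → EuclideanSpace ℝ (Fin d)) (hξmeas : ∀ k, Measurable (ξ k))
    (hdens : ∀ k, Measure.map (ξ k) P =
      volume.withDensity (fun y => ENNReal.ofReal (f y))) :
    ∀ x : EuclideanSpace ℝ (Fin d), ∀ n : ℕ, 1 ≤ n →
      |(∫ ω, (1 / (n : ℝ)) * ∑ k ∈ Icc 1 n,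
          ((h k) ^ d)⁻¹ * K ((h k)⁻¹ • (x - ξ k ω)) ∂P) - f x| ≤
        (L * (∫ y, ‖y‖ ^ α * |K y|) / n) * ∑ k ∈ Icc 1 n, (h k) ^ α :=
  wolverton_wagner_bias_bound_general P d f K L α hα0 hf hfpos hK hK1 hKα h hpos ξ hξmeas hdens
end
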